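/- arXiv:2207.03987 — 3 statements merged into one kernel-verified Lean document; each statement's English description precedes it below -/
import Mathlib

section
/- Let n ≥ 2 and let A, B ∈ SL_n(ℤ) be such that every entry of A, A⁻¹, B, and B⁻¹ is bounded in absolute value by a constant c ≥ 1 with n·c ≥ 2. Suppose the homomorphism φ from the free group F₂ on two generators to SL_n(ℤ) sending the generators to A and B is injective (i.e., A and B generate a free subgroup of rank two). Let p ≥ 3 be a prime and let φ_p : F₂ → SL_n(𝔽_p) be the composition of φ with reduction modulo p. Then every nontrivial element w ∈ F₂ with φ_p(w) = 1 has reduced word length at least ⌊log(p−1)/log(n·c)⌋. Equivalently, the girth of the Cayley graph of the subgroup of SL_n(𝔽_p) generated by the reductions A_p, B_p with respect to {A_p^{±1}, B_p^{±1}} is at least ⌊log(p−1)/log(n·c)⌋. -/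
/-!
If `w ≠ 1` lies in the kernel of reduction mod `p`, then by freeness `φ(w) ≠ 1` is an integer
matrix congruent to `1` mod `p`, so one of its entries has absolute value at least `p - 1`.
On the other hand `φ(w)` is a product of `‖w‖` matrices with entries bounded by `c`, so all
of its entries are bounded by `(n c)^‖w‖`. Taking logarithms gives the bound.
-/

namespace Matrix

theorem exists_le_abs_apply_of_map_intCast_eq_one {n : Type*} [DecidableEq n] {p : ℕ}
    {M : Matrix n n ℤ} (hM : M ≠ 1) (hMp : M.map (Int.cast : ℤ → ZMod p) = 1) :
    ∃ i j, (p : ℤ) - 1 ≤ |M i j| := by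
  obtain ⟨i, j, hij⟩ : ∃ i j, M i j ≠ (1 : Matrix n n ℤ) i j := by
    by_contra! h
    exact hM (ext h)
  have hcong : ((M i j : ℤ) : ZMod p) = (((1 : Matrix n n ℤ) i j : ℤ) : ZMod p) := by
    have := congrFun (congrFun hMp i) j
    by_cases h : i = j <;> simp_all [one_apply]
  have hdvd : (p : ℤ) ∣ M i j - (1 : Matrix n n ℤ) i j :=
    (ZMod.intCast_eq_intCast_iff_dvd_sub _ _ _).mp hcong.symm
  have hp_le : (p : ℤ) ≤ |M i j - (1 : Matrix n n ℤ) i j| :=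
    Int.le_of_dvd (abs_pos.mpr (sub_ne_zero.mpr hij)) ((dvd_abs _ _).mpr hdvd)
  have hone : |(1 : Matrix n n ℤ) i j| ≤ 1 := by
    by_cases h : i = j <;> simp [one_apply, h]
  exact ⟨i, j, by linarith [abs_sub (M i j) ((1 : Matrix n n ℤ) i j)]⟩

variable {n R : Type*} [Fintype n] [DecidableEq n] [CommRing R] [LinearOrder R]
  [IsStrictOrderedRing R]

theorem abs_list_prod_apply_le {c : R} (hc : 0 ≤ c) (L : List (Matrix n n R))
    (hL : ∀ M ∈ L, ∀ i j, |M i j| ≤ c) (i j : n) :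
    |L.prod i j| ≤ (Fintype.card n * c) ^ L.length := by
  induction L generalizing i j with
  | nil => by_cases h : i = j <;> simp [h]
  | cons M L ih =>
    have hM := hL M List.mem_cons_self
    have ih' := ih fun N hN => hL N (List.mem_cons_of_mem _ hN)
    calc |(M :: L).prod i j| ≤ ∑ k, |M i k| * |L.prod k j| := by
          simpa only [List.prod_cons, mul_apply, abs_mul] using
            Finset.abs_sum_le_sum_abs (fun k => M i k * L.prod k j) Finset.univ
      _ ≤ ∑ _k : n, c * (Fintype.card n * c) ^ L.length := by
          gcongr with k
          · exact hM i k
          · exact ih' k j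
      _ = (Fintype.card n * c) ^ (M :: L).length := by
          simp only [Finset.sum_const, Finset.card_univ, nsmul_eq_mul, List.length_cons]
          ring

theorem abs_freeGroupLift_apply_le {α : Type*} [DecidableEq α]
    (f : α → SpecialLinearGroup n R) {c : R} (hc : 0 ≤ c)
    (hf : ∀ a i j, |(f a : Matrix n n R) i j| ≤ c)
    (hf_inv : ∀ a i j, |(((f a)⁻¹ : SpecialLinearGroup n R) : Matrix n n R) i j| ≤ c)
    (w : FreeGroup α) (i j : n) :
    |(FreeGroup.lift f w : Matrix n n R) i j| ≤ (Fintype.card n * c) ^ w.norm := by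
  let g : α × Bool → Matrix n n R := fun x =>
    (cond x.2 (f x.1) (f x.1)⁻¹ : SpecialLinearGroup n R)
  have hw : (FreeGroup.lift f w : Matrix n n R) = (w.toWord.map g).prod := by
    have hlift :
        FreeGroup.lift f w = (w.toWord.map fun x => cond x.2 (f x.1) (f x.1)⁻¹).prod := by
      rw [← FreeGroup.lift_mk, FreeGroup.mk_toWord]
    rw [hlift, ← SpecialLinearGroup.coeMonoidHom_apply, map_list_prod, List.map_map]
    rfl
  rw [hw, FreeGroup.norm, ← List.length_map (f := g)]
  refine abs_list_prod_apply_le hc _ ?_ i j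
  simp only [List.mem_map]
  rintro _ ⟨⟨a, _ | _⟩, -, rfl⟩
  exacts [hf_inv a, hf a]

end Matrix

theorem Real.floor_log_div_log_le_of_le_pow {x b : ℝ} {k : ℕ} (hx : 0 < x) (hb : 1 < b)
    (h : x ≤ b ^ k) : ⌊Real.log x / Real.log b⌋ ≤ k := by
  have hlog : Real.log x / Real.log b ≤ k := by
    rw [div_le_iff₀ (Real.log_pos hb), ← Real.log_pow]
    exact Real.log_le_log hx h
  exact_mod_cast (Int.floor_le _).trans hlog

theorem girth_lower_bound_of_free_general (n : ℕ) (c : ℤ) (hc : 1 ≤ c)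
    (hnc : 2 ≤ (n : ℤ) * c)
    (A B : Matrix.SpecialLinearGroup (Fin n) ℤ)
    (hAbd : ∀ i j, |(A : Matrix (Fin n) (Fin n) ℤ) i j| ≤ c)
    (hAibd : ∀ i j, |((A⁻¹ : Matrix.SpecialLinearGroup (Fin n) ℤ) :
      Matrix (Fin n) (Fin n) ℤ) i j| ≤ c)
    (hBbd : ∀ i j, |(B : Matrix (Fin n) (Fin n) ℤ) i j| ≤ c)
    (hBibd : ∀ i j, |((B⁻¹ : Matrix.SpecialLinearGroup (Fin n) ℤ) :
      Matrix (Fin n) (Fin n) ℤ) i j| ≤ c)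
    (hfree : Function.Injective (FreeGroup.lift ![A, B]))
    (p : ℕ) (hp3 : 3 ≤ p)
    (w : FreeGroup (Fin 2)) (hw : w ≠ 1)
    (hker : Matrix.SpecialLinearGroup.map (Int.castRingHom (ZMod p))
      (FreeGroup.lift ![A, B] w) = 1) :
    ⌊Real.log ((p : ℝ) - 1) / Real.log ((n : ℝ) * (c : ℝ))⌋ ≤ (FreeGroup.norm w : ℤ) := by
  have hφw : FreeGroup.lift ![A, B] w ≠ 1 := fun h => hw (hfree (h.trans (map_one _).symm))
  have hmod : (FreeGroup.lift ![A, B] w : Matrix (Fin n) (Fin n) ℤ).map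
      (Int.cast : ℤ → ZMod p) = 1 := congrArg Subtype.val hker
  obtain ⟨i, j, hij⟩ := Matrix.exists_le_abs_apply_of_map_intCast_eq_one
    (fun h => hφw (Subtype.ext h)) hmod
  have hentries := Matrix.abs_freeGroupLift_apply_le ![A, B] (by linarith)
    (Fin.forall_fin_two.mpr ⟨hAbd, hBbd⟩) (Fin.forall_fin_two.mpr ⟨hAibd, hBibd⟩) w i j
  rw [Fintype.card_fin] at hentries
  have hpow : (p : ℤ) - 1 ≤ (n * c) ^ w.norm := hij.trans hentries
  have hp3' : (3 : ℝ) ≤ p := by exact_mod_cast hp3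
  have hnc' : (2 : ℝ) ≤ n * c := by exact_mod_cast hnc
  exact Real.floor_log_div_log_le_of_le_pow (by linarith) (by linarith) (by exact_mod_cast hpow)

/-- **Girth lower bound.** Let `n ≥ 2` and let `A, B ∈ SL_n(ℤ)` have all entries of
`A, A⁻¹, B, B⁻¹` bounded in absolute value by `c ≥ 1` with `n·c ≥ 2`. If `A` and `B`
generate a free subgroup of rank two, and `p ≥ 3` is a prime, then every nontrivial
element `w` of the free group `F₂` whose image in `SL_n(𝔽_p)` (under sending the
generators to the reductions of `A` and `B` mod `p`) is trivial has reduced word length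
at least `⌊log (p-1) / log (n·c)⌋`. -/
theorem girth_lower_bound_of_free (n : ℕ) (hn : 2 ≤ n) (c : ℤ) (hc : 1 ≤ c)
    (hnc : 2 ≤ (n : ℤ) * c)
    (A B : Matrix.SpecialLinearGroup (Fin n) ℤ)
    (hAbd : ∀ i j, |(A : Matrix (Fin n) (Fin n) ℤ) i j| ≤ c)
    (hAibd : ∀ i j, |((A⁻¹ : Matrix.SpecialLinearGroup (Fin n) ℤ) :
      Matrix (Fin n) (Fin n) ℤ) i j| ≤ c)
    (hBbd : ∀ i j, |(B : Matrix (Fin n) (Fin n) ℤ) i j| ≤ c)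
    (hBibd : ∀ i j, |((B⁻¹ : Matrix.SpecialLinearGroup (Fin n) ℤ) :
      Matrix (Fin n) (Fin n) ℤ) i j| ≤ c)
    (hfree : Function.Injective (FreeGroup.lift ![A, B]))
    (p : ℕ) (hp : p.Prime) (hp3 : 3 ≤ p)
    (w : FreeGroup (Fin 2)) (hw : w ≠ 1)
    (hker : Matrix.SpecialLinearGroup.map (Int.castRingHom (ZMod p))
      (FreeGroup.lift ![A, B] w) = 1) :
    ⌊Real.log ((p : ℝ) - 1) / Real.log ((n : ℝ) * (c : ℝ))⌋ ≤ (FreeGroup.norm w : ℤ) :=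
  girth_lower_bound_of_free_general n c hc hnc A B hAbd hAibd hBbd hBibd hfree p hp3 w hw hker
end

section
/- Let G be a group and let A, B ∈ G be elements such that the four elements A, B, A⁻¹, B⁻¹ are pairwise distinct; let S = {A, B, A⁻¹, B⁻¹}. For each T ∈ S, let s_T : Fin 3 → G be an injective function whose image is S \ {T⁻¹}. Then for every b ∈ Fin 3 there exist b' ∈ Fin 3 and T, T' ∈ S such that s_{s_T(b')}(b) ≠ s_{s_{T'}(b')}(b); that is, the pair (b', b) is a bad tail. -/
private lemma fin3_third : ∀ p q : Fin 3, ∃ i : Fin 3, i ≠ p ∧ i ≠ q := by decide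

/-- Auxiliary lemma: if `f ∘ sA = f ∘ sC` where `sA, sC` are injective with ranges
`{a,b,c,d} \ {c}` and `{a,b,c,d} \ {a}` respectively (here `c` plays the role of `a⁻¹`
and `d` of `b⁻¹`), then `f a = f c` and `f a ∈ {b, d}`. -/
private lemma bad_tail_aux {G : Type*} (a b c d : G)
    (hab : a ≠ b) (hac : a ≠ c) (had : a ≠ d) (hbc : b ≠ c) (hbd : b ≠ d) (hcd : c ≠ d)
    (f : G → G) (sA sC : Fin 3 → G)
    (injA : Function.Injective sA) (injC : Function.Injective sC)
    (rA : Set.range sA = ({a, b, c, d} : Set G) \ {c})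
    (rC : Set.range sC = ({a, b, c, d} : Set G) \ {a})
    (hfa : f a ≠ c) (hfc : f c ≠ a) (hfb : f b ≠ d) (hfd : f d ≠ b)
    (hfaS : f a ∈ ({a, b, c, d} : Set G))
    (heq : ∀ i, f (sA i) = f (sC i)) :
    f a = f c ∧ (f a = b ∨ f a = d) := by
  have memS : ∀ x : G, x ∈ ({a, b, c, d} : Set G) ↔ (x = a ∨ x = b ∨ x = c ∨ x = d) := by
    intro x; simp [Set.mem_insert_iff]
  -- index hitting a under sA
  obtain ⟨i₁, hi₁⟩ : ∃ i, sA i = a := by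
    have : a ∈ Set.range sA := by
      rw [rA]; exact ⟨by simp, by simp [hac]⟩
    exact this
  -- value of sC at i₁
  have hx : sC i₁ = b ∨ sC i₁ = c ∨ sC i₁ = d := by
    have h : sC i₁ ∈ Set.range sC := ⟨i₁, rfl⟩
    rw [rC] at h
    rcases (memS _).1 h.1 with h' | h' | h' | h'
    · exact absurd h' h.2
    · exact Or.inl h'
    · exact Or.inr (Or.inl h')
    · exact Or.inr (Or.inr h')
  have h1 : f a = f (sC i₁) := by rw [← hi₁]; exact heq i₁
  rcases hx with hx | hx | hx
  · -- sC i₁ = b : f a = f b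
    rw [hx] at h1
    obtain ⟨i₂, hi₂⟩ : ∃ i, sC i = c := by
      have : c ∈ Set.range sC := by
        rw [rC]; exact ⟨by simp, by simp [Ne.symm hac]⟩
      exact this
    have hne : i₂ ≠ i₁ := by
      intro h; rw [h, hx] at hi₂; exact hbc hi₂
    have hy : sA i₂ = b ∨ sA i₂ = d := by
      have h : sA i₂ ∈ Set.range sA := ⟨i₂, rfl⟩
      rw [rA] at h
      have hna : sA i₂ ≠ a := by
        intro h'; exact hne (injA (h'.trans hi₁.symm))
      rcases (memS _).1 h.1 with h' | h' | h' | h'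
      · exact absurd h' hna
      · exact Or.inl h'
      · exact absurd h' h.2
      · exact Or.inr h'
    have h2 : f (sA i₂) = f c := by rw [heq i₂, hi₂]
    rcases hy with hy | hy
    · -- f b = f c, so f a = f c
      rw [hy] at h2
      have hfac : f a = f c := h1.trans h2
      refine ⟨hfac, ?_⟩
      rcases (memS _).1 hfaS with h' | h' | h' | h'
      · exact absurd (hfac.symm.trans h') hfc
      · exact Or.inl h'
      · exact absurd h' hfa
      · exact Or.inr h'
    · -- sA i₂ = d : f d = f c ; use third index to get f b = f d, all equal, contradiction
      rw [hy] at h2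
      obtain ⟨i₃, h31, h32⟩ := fin3_third i₁ i₂
      have hz : sA i₃ = b := by
        have h : sA i₃ ∈ Set.range sA := ⟨i₃, rfl⟩
        rw [rA] at h
        have hna : sA i₃ ≠ a := fun h' => h31 (injA (h'.trans hi₁.symm))
        have hnd : sA i₃ ≠ d := fun h' => h32 (injA (h'.trans hy.symm))
        rcases (memS _).1 h.1 with h' | h' | h' | h'
        · exact absurd h' hna
        · exact h'
        · exact absurd h' h.2
        · exact absurd h' hnd
      have hw : sC i₃ = d := by
        have h : sC i₃ ∈ Set.range sC := ⟨i₃, rfl⟩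
        rw [rC] at h
        have hnb : sC i₃ ≠ b := fun h' => h31 (injC (h'.trans hx.symm))
        have hnc : sC i₃ ≠ c := fun h' => h32 (injC (h'.trans hi₂.symm))
        rcases (memS _).1 h.1 with h' | h' | h' | h'
        · exact absurd h' h.2
        · exact absurd h' hnb
        · exact absurd h' hnc
        · exact h'
      have h3 : f b = f d := by rw [← hz, ← hw]; exact heq i₃
      -- now f a = f b = f d = f c, contradiction
      exfalso
      rcases (memS _).1 hfaS with h' | h' | h' | h'
      · exact hfc ((h2.symm.trans (h3.symm.trans h1.symm)).trans h')
      · exact hfd ((h3.symm.trans h1.symm).trans h')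
      · exact hfa h'
      · exact hfb (h1.symm.trans h')
  · -- sC i₁ = c : f a = f c directly
    rw [hx] at h1
    refine ⟨h1, ?_⟩
    rcases (memS _).1 hfaS with h' | h' | h' | h'
    · exact absurd (h1.symm.trans h') hfc
    · exact Or.inl h'
    · exact absurd h' hfa
    · exact Or.inr h'
  · -- sC i₁ = d : f a = f d
    rw [hx] at h1
    obtain ⟨i₂, hi₂⟩ : ∃ i, sC i = c := by
      have : c ∈ Set.range sC := by
        rw [rC]; exact ⟨by simp, by simp [Ne.symm hac]⟩
      exact this
    have hne : i₂ ≠ i₁ := by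
      intro h; rw [h, hx] at hi₂; exact hcd hi₂.symm
    have hy : sA i₂ = b ∨ sA i₂ = d := by
      have h : sA i₂ ∈ Set.range sA := ⟨i₂, rfl⟩
      rw [rA] at h
      have hna : sA i₂ ≠ a := fun h' => hne (injA (h'.trans hi₁.symm))
      rcases (memS _).1 h.1 with h' | h' | h' | h'
      · exact absurd h' hna
      · exact Or.inl h'
      · exact absurd h' h.2
      · exact Or.inr h'
    have h2 : f (sA i₂) = f c := by rw [heq i₂, hi₂]
    rcases hy with hy | hy
    · -- sA i₂ = b : f b = f c ; third index: sA i₃ = d, sC i₃ = b, f d = f b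
      rw [hy] at h2
      obtain ⟨i₃, h31, h32⟩ := fin3_third i₁ i₂
      have hz : sA i₃ = d := by
        have h : sA i₃ ∈ Set.range sA := ⟨i₃, rfl⟩
        rw [rA] at h
        have hna : sA i₃ ≠ a := fun h' => h31 (injA (h'.trans hi₁.symm))
        have hnb : sA i₃ ≠ b := fun h' => h32 (injA (h'.trans hy.symm))
        rcases (memS _).1 h.1 with h' | h' | h' | h'
        · exact absurd h' hna
        · exact absurd h' hnb
        · exact absurd h' h.2
        · exact h'
      have hw : sC i₃ = b := by
        have h : sC i₃ ∈ Set.range sC := ⟨i₃, rfl⟩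
        rw [rC] at h
        have hnd : sC i₃ ≠ d := fun h' => h31 (injC (h'.trans hx.symm))
        have hnc : sC i₃ ≠ c := fun h' => h32 (injC (h'.trans hi₂.symm))
        rcases (memS _).1 h.1 with h' | h' | h' | h'
        · exact absurd h' h.2
        · exact h'
        · exact absurd h' hnc
        · exact absurd h' hnd
      have h3 : f d = f b := by rw [← hz, ← hw]; exact heq i₃
      -- f a = f d = f b = f c, contradiction
      exfalso
      rcases (memS _).1 hfaS with h' | h' | h' | h'
      · exact hfc ((h2.symm.trans (h3.symm.trans h1.symm)).trans h')
      · exact hfd (h1.symm.trans h')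
      · exact hfa h'
      · exact hfb ((h3.symm.trans h1.symm).trans h')
    · -- sA i₂ = d : f d = f c, so f a = f c
      rw [hy] at h2
      have hfac : f a = f c := h1.trans h2
      refine ⟨hfac, ?_⟩
      rcases (memS _).1 hfaS with h' | h' | h' | h'
      · exact absurd (hfac.symm.trans h') hfc
      · exact Or.inl h'
      · exact absurd h' hfa
      · exact Or.inr h'

/-- **Always at least one bad tail per symbol.** Let `G` be a group with elements `A, B`
such that `A, B, A⁻¹, B⁻¹` are pairwise distinct, and let `S = {A, B, A⁻¹, B⁻¹}`. Suppose
for each `T ∈ S` we are given an injective map `s T : Fin 3 → G` with range `S \ {T⁻¹}`.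
Then for every symbol `b` there is a symbol `b'` and states `T, T' ∈ S` such that
`s (s T b') b ≠ s (s T' b') b`; i.e. `(b', b)` is a bad tail. -/
theorem exists_bad_tail {G : Type*} [Group G] (A B : G)
    (hdistinct : ([A, B, A⁻¹, B⁻¹] : List G).Nodup)
    (s : G → Fin 3 → G)
    (hs : ∀ T ∈ ({A, B, A⁻¹, B⁻¹} : Set G),
      Function.Injective (s T) ∧ Set.range (s T) = ({A, B, A⁻¹, B⁻¹} : Set G) \ {T⁻¹}) :
    ∀ b : Fin 3, ∃ b' : Fin 3, ∃ T ∈ ({A, B, A⁻¹, B⁻¹} : Set G),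
      ∃ T' ∈ ({A, B, A⁻¹, B⁻¹} : Set G), s (s T b') b ≠ s (s T' b') b := by
  intro b
  by_contra hcon
  push_neg at hcon
  have hAB : A ≠ B := by intro h; rw [h] at hdistinct; simp [List.nodup_cons] at hdistinct
  have hAAi : A ≠ A⁻¹ := by
    intro h; rw [← h] at hdistinct; simp [List.nodup_cons] at hdistinct
  have hABi : A ≠ B⁻¹ := by
    intro h; rw [h] at hdistinct; simp [List.nodup_cons] at hdistinct
  have hBAi : B ≠ A⁻¹ := by
    intro h; rw [h] at hdistinct; simp [List.nodup_cons] at hdistinct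
  have hBBi : B ≠ B⁻¹ := by
    intro h; rw [← h] at hdistinct; simp [List.nodup_cons] at hdistinct
  have hAiBi : A⁻¹ ≠ B⁻¹ := by
    intro h; rw [h] at hdistinct; simp [List.nodup_cons] at hdistinct
  set f : G → G := fun U => s U b with hf
  have hSmem : ∀ x : G, x ∈ ({A, B, A⁻¹, B⁻¹} : Set G) ↔
      (x = A ∨ x = B ∨ x = A⁻¹ ∨ x = B⁻¹) := by
    intro x; simp [Set.mem_insert_iff]
  have hA : A ∈ ({A, B, A⁻¹, B⁻¹} : Set G) := by simp
  have hB : B ∈ ({A, B, A⁻¹, B⁻¹} : Set G) := by simp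
  have hAi : A⁻¹ ∈ ({A, B, A⁻¹, B⁻¹} : Set G) := by simp
  have hBi : B⁻¹ ∈ ({A, B, A⁻¹, B⁻¹} : Set G) := by simp
  obtain ⟨injA, rA⟩ := hs A hA
  obtain ⟨injB, rB⟩ := hs B hB
  obtain ⟨injAi, rAi⟩ := hs A⁻¹ hAi
  obtain ⟨injBi, rBi⟩ := hs B⁻¹ hBi
  rw [inv_inv] at rAi rBi
  -- properties of f
  have hfv : ∀ T, T ∈ ({A, B, A⁻¹, B⁻¹} : Set G) →
      f T ∈ ({A, B, A⁻¹, B⁻¹} : Set G) ∧ f T ≠ T⁻¹ := by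
    intro T hT
    have : f T ∈ Set.range (s T) := ⟨b, rfl⟩
    rw [(hs T hT).2] at this
    exact ⟨this.1, this.2⟩
  have hfa := hfv A hA
  have hfb := hfv B hB
  have hfai := hfv A⁻¹ hAi
  have hfbi := hfv B⁻¹ hBi
  rw [inv_inv] at hfai hfbi
  -- pairing constraints
  have hcAC : ∀ i, f (s A i) = f (s A⁻¹ i) := fun i => hcon i A hA A⁻¹ hAi
  have hcBD : ∀ i, f (s B i) = f (s B⁻¹ i) := fun i => hcon i B hB B⁻¹ hBi
  have hcAB : ∀ i, f (s A i) = f (s B i) := fun i => hcon i A hA B hB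
  -- main facts from the auxiliary lemma
  have h1 : f A = f A⁻¹ ∧ (f A = B ∨ f A = B⁻¹) :=
    bad_tail_aux A B A⁻¹ B⁻¹ hAB hAAi hABi hBAi hBBi hAiBi f (s A) (s A⁻¹)
      injA injAi rA rAi hfa.2 hfai.2 hfb.2 hfbi.2 hfa.1 hcAC
  have hset : ({A, B, A⁻¹, B⁻¹} : Set G) = ({B, A, B⁻¹, A⁻¹} : Set G) := by
    ext x; simp [Set.mem_insert_iff]; tauto
  rw [hset] at rB rBi
  have h2 : f B = f B⁻¹ ∧ (f B = A ∨ f B = A⁻¹) :=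
    bad_tail_aux B A B⁻¹ A⁻¹ (Ne.symm hAB) hBBi hBAi hABi hAAi (Ne.symm hAiBi)
      f (s B) (s B⁻¹) injB injBi rB rBi hfb.2 hfbi.2 hfa.2 hfai.2 (hset ▸ hfb.1) hcBD
  -- final contradiction: f A ∈ {B, B⁻¹}, f B ∈ {A, A⁻¹}, so f A ≠ f B,
  -- but the pairing of s A and s B forces f A = f B
  have hfABne : f A ≠ f B := by
    rcases h1.2 with e1 | e1 <;> rcases h2.2 with e2 | e2 <;> rw [e1, e2] <;>
      first
        | exact Ne.symm hAB
        | exact hBAi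
        | exact Ne.symm hABi
        | exact Ne.symm hAiBi
  obtain ⟨i₁, hi₁⟩ : ∃ i, s A i = B⁻¹ := by
    have : B⁻¹ ∈ Set.range (s A) := by
      rw [rA]; exact ⟨by simp, by simp [Ne.symm hAiBi]⟩
    exact this
  have ht : s B i₁ = A ∨ s B i₁ = B ∨ s B i₁ = A⁻¹ := by
    have h : s B i₁ ∈ Set.range (s B) := ⟨i₁, rfl⟩
    rw [rB] at h
    rcases (hSmem _).1 (hset ▸ h.1) with h' | h' | h' | h'
    · exact Or.inl h'
    · exact Or.inr (Or.inl h')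
    · exact Or.inr (Or.inr h')
    · exact absurd h' (by simpa using h.2)
  have hBiv : f B⁻¹ = f (s B i₁) := by rw [← hi₁]; exact hcAB i₁
  rcases ht with ht | ht | ht
  · rw [ht] at hBiv
    exact hfABne ((h2.1.trans hBiv).symm)
  · -- s B i₁ = B; use the index hitting B under s A
    obtain ⟨i₂, hi₂⟩ : ∃ i, s A i = B := by
      have : B ∈ Set.range (s A) := by
        rw [rA]; exact ⟨by simp, by simp [hBAi]⟩
      exact this
    have hne : i₂ ≠ i₁ := fun h => hBBi (hi₂.symm.trans (by rw [h]; exact hi₁))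
    have hu : s B i₂ = A ∨ s B i₂ = A⁻¹ := by
      have h : s B i₂ ∈ Set.range (s B) := ⟨i₂, rfl⟩
      rw [rB] at h
      have hnB : s B i₂ ≠ B := fun h' => hne (injB (h'.trans ht.symm))
      rcases (hSmem _).1 (hset ▸ h.1) with h' | h' | h' | h'
      · exact Or.inl h'
      · exact absurd h' hnB
      · exact Or.inr h'
      · exact absurd h' (by simpa using h.2)
    have hBv : f B = f (s B i₂) := by have := hcAB i₂; rwa [hi₂] at this
    rcases hu with hu | hu
    · rw [hu] at hBv
      exact hfABne hBv.symm
    · rw [hu] at hBv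
      exact hfABne ((hBv.trans h1.1.symm).symm)
  · rw [ht] at hBiv
    exact hfABne (h1.1.trans ((h2.1.trans hBiv).symm))
end

section
/- Let G be a group and let A, B ∈ G be elements such that the four elements A, B, A⁻¹, B⁻¹ are pairwise distinct; let S = {A, B, A⁻¹, B⁻¹}. For each T ∈ S, let s_T : Fin 3 → G be an injective function whose image is S \ {T⁻¹}. Then the set of good tails, i.e., the set of pairs (b', b) ∈ Fin 3 × Fin 3 such that the function T ↦ s_{s_T(b')}(b) is constant on S, has cardinality at most 6. -/
/-!
Fix `b'`, pick `T₀ ∈ S`, and let `V = s_{T₀}(b')` and `U = s_{V⁻¹}(b')`; non-backtracking gives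
`U ≠ V`. If `(b', b)` is a good tail, comparing the previous steps `V⁻¹` and `T₀` gives
`s_U(b) = s_V(b)`, which avoids both `U⁻¹` and `V⁻¹`. As `s_U` is injective, at most `|S| - 2 = 2`
symbols `b` complete `b'` to a good tail, so there are at most `3 · 2` good tails.
-/

open Set

theorem Set.ncard_setOf_mem_of_nodup {α : Type*} {l : List α} (hl : l.Nodup) :
    {x | x ∈ l}.ncard = l.length := by
  classical
  rw [← List.coe_toFinset, ncard_coe_finset, List.toFinset_card_of_nodup hl]

theorem Set.ncard_setOf_prod_le {α β : Type*} [Fintype α] [Finite β] (P : α → β → Prop)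
    {n : ℕ} (h : ∀ a, {b | P a b}.ncard ≤ n) :
    {c : α × β | P c.1 c.2}.ncard ≤ Fintype.card α * n := by
  rw [← Nat.card_coe_set_eq]
  change Nat.card {c : α × β // P c.1 c.2} ≤ _
  rw [Nat.card_congr (Equiv.subtypeProdEquivSigmaSubtype P), Nat.card_sigma]
  have hfiber (a : α) : Nat.card {b // P a b} ≤ n :=
    (Nat.card_coe_set_eq {b | P a b}).trans_le (h a)
  simpa using Finset.sum_le_card_nsmul Finset.univ _ n fun a _ => hfiber a

section GoodTails

variable {G ι : Type*} [InvolutiveInv G] (S : Set G) (s : G → ι → G)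

def IsGoodTail (b' b : ι) : Prop :=
  ∀ T ∈ S, ∀ T' ∈ S, s (s T b') b = s (s T' b') b

variable {S s}

omit [InvolutiveInv G] in
theorem apply_mem_diff_inv [Inv G] (hs : ∀ T ∈ S, Set.range (s T) = S \ {T⁻¹}) {T : G}
    (hT : T ∈ S) (b : ι) : s T b ∈ S \ {T⁻¹} :=
  hs T hT ▸ mem_range_self b

theorem mem_diff_inv_of_isGoodTail (hS : ∀ T ∈ S, T⁻¹ ∈ S)
    (hs : ∀ T ∈ S, Set.range (s T) = S \ {T⁻¹}) {T₀ : G} (hT₀ : T₀ ∈ S) {b' b : ι}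
    (hb : IsGoodTail S s b' b) :
    s (s (s T₀ b')⁻¹ b') b ∈ S \ {(s (s T₀ b')⁻¹ b')⁻¹, (s T₀ b')⁻¹} := by
  set V := s T₀ b'
  set U := s V⁻¹ b'
  have hV : V ∈ S := (apply_mem_diff_inv hs hT₀ b').1
  have hU : U ∈ S := (apply_mem_diff_inv hs (hS V hV) b').1
  have hUV : s U b = s V b := hb V⁻¹ (hS V hV) T₀ hT₀
  obtain ⟨hUb, hUb_ne⟩ := apply_mem_diff_inv hs hU b
  have hVb_ne := (apply_mem_diff_inv hs hV b).2
  rw [← hUV] at hVb_ne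
  exact ⟨hUb, by rintro (h | h); exacts [hUb_ne h, hVb_ne h]⟩

theorem ncard_setOf_isGoodTail_le (hSfin : S.Finite) (hS : ∀ T ∈ S, T⁻¹ ∈ S)
    (hs : ∀ T ∈ S, Function.Injective (s T) ∧ Set.range (s T) = S \ {T⁻¹})
    {T₀ : G} (hT₀ : T₀ ∈ S) (b' : ι) :
    {b | IsGoodTail S s b' b}.ncard ≤ S.ncard - 2 := by
  have hrange T hT := (hs T hT).2
  set V := s T₀ b'
  set U := s V⁻¹ b'
  have hV : V ∈ S := (apply_mem_diff_inv hrange hT₀ b').1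
  obtain ⟨hU, hUV⟩ := apply_mem_diff_inv hrange (hS V hV) b'
  have hUV_inv : U⁻¹ ≠ V⁻¹ := inv_injective.ne fun h => hUV (h.trans (inv_inv V).symm)
  have hpair : {U⁻¹, V⁻¹} ⊆ S := pair_subset (hS U hU) (hS V hV)
  calc {b | IsGoodTail S s b' b}.ncard ≤ (S \ {U⁻¹, V⁻¹}).ncard :=
        ncard_le_ncard_of_injOn (s U) (fun b hb => mem_diff_inv_of_isGoodTail hS hrange hT₀ hb)
          (hs U hU).1.injOn hSfin.sdiff
    _ = S.ncard - 2 := by rw [ncard_sdiff hpair, ncard_pair hUV_inv]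

end GoodTails

/-- **At most six good tails.** Let `G` be a group with elements `A, B` such that
`A, B, A⁻¹, B⁻¹` are pairwise distinct, and let `S = {A, B, A⁻¹, B⁻¹}`. Suppose for each
`T ∈ S` we are given an injective map `s T : Fin 3 → G` with range `S \ {T⁻¹}`. Then the
set of good tails, i.e. pairs `(b', b)` such that `T ↦ s (s T b') b` is constant on `S`,
has cardinality at most `6`. -/
theorem good_tails_card_le_six {G : Type*} [Group G] (A B : G)
    (hdistinct : ([A, B, A⁻¹, B⁻¹] : List G).Nodup)
    (s : G → Fin 3 → G)
    (hs : ∀ T ∈ ({A, B, A⁻¹, B⁻¹} : Set G),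
      Function.Injective (s T) ∧ Set.range (s T) = ({A, B, A⁻¹, B⁻¹} : Set G) \ {T⁻¹}) :
    {bb : Fin 3 × Fin 3 | ∀ T ∈ ({A, B, A⁻¹, B⁻¹} : Set G),
      ∀ T' ∈ ({A, B, A⁻¹, B⁻¹} : Set G), s (s T bb.1) bb.2 = s (s T' bb.1) bb.2}.ncard ≤ 6 := by
  set S : Set G := {A, B, A⁻¹, B⁻¹}
  have hS : ∀ T ∈ S, T⁻¹ ∈ S := by rintro T (rfl | rfl | rfl | rfl) <;> simp [S]
  have hcard : S.ncard = 4 := by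
    rw [show S = {x | x ∈ [A, B, A⁻¹, B⁻¹]} by ext; simp [S]]
    exact ncard_setOf_mem_of_nodup hdistinct
  calc {c : Fin 3 × Fin 3 | IsGoodTail S s c.1 c.2}.ncard
      ≤ Fintype.card (Fin 3) * (S.ncard - 2) :=
        ncard_setOf_prod_le _
          (ncard_setOf_isGoodTail_le (toFinite S) hS hs (T₀ := A) (by simp [S]))
    _ = 6 := by rw [hcard, Fintype.card_fin]
end
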